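/- arXiv:2002.10498 — 2 statements merged into one kernel-verified Lean document; each statement's English description precedes it below -/
import Mathlib

section
/- (X-intersection Property, part ii) Let v be a bivalent node, f_1 a join arc with head v and g_1 a split arc with tail v such that f_1 g_1 is an omnitig. Then there is no omnitig f_1 g' with g' ≠ g_1, tail(g') = v, and no omnitig f' g_1 with f' ≠ f_1, head(f') = v. -/
/-- A directed multigraph: arcs `E` with tail and head maps into nodes `V`. -/
structure MultiDigraph (V E : Type) where
  tail : E → V
  head : E → V

namespace MultiDigraph

variable {V E : Type} (G : MultiDigraph V E)

/-- A walk is a (possibly empty) list of arcs that chain head-to-tail. -/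
def IsWalk (W : List E) : Prop := W.Chain' (fun a b => G.head a = G.tail b)

/-- The node sequence `v₀, v₁, …, v_ℓ` of a nonempty walk (empty for the empty walk). -/
def nodes : List E → List V
  | [] => []
  | e :: W => G.tail e :: (e :: W).map G.head

/-- The start node of a nonempty walk. -/
def src (W : List E) : Option V := W.head?.map G.tail

/-- The end node of a nonempty walk. -/
def dst (W : List E) : Option V := W.getLast?.map G.head

/-- A path: a walk whose nodes are all distinct, except that the last node may
equal the first one (closed path). -/
def IsPath (W : List E) : Prop :=
  G.IsWalk W ∧ (G.nodes W).dropLast.Nodup ∧ (G.nodes W).tail.Nodup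

/-- `P` is a forbidden path for the pair of arcs `(eR, eL)`: a non-empty path from
`tail eR` to `head eL` whose first arc differs from `eR` and last arc differs from `eL`. -/
def ForbiddenPath (eR eL : E) (P : List E) : Prop :=
  G.IsPath P ∧ P ≠ [] ∧ G.src P = some (G.tail eR) ∧ G.dst P = some (G.head eL) ∧
    P.head? ≠ some eR ∧ P.getLast? ≠ some eL

/-- A walk `e₀ … e_ℓ` is an omnitig if for all `1 ≤ i ≤ j ≤ ℓ` there is no
forbidden path from `tail e_j` to `head e_{i-1}`. -/
def IsOmnitig (W : List E) : Prop :=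
  G.IsWalk W ∧ ∀ i j : ℕ, (hi : 1 ≤ i) → (hij : i ≤ j) → (hj : j < W.length) →
    ¬ ∃ P, G.ForbiddenPath (W[j]'hj) (W[i-1]'(by omega)) P

/-- `u` reaches `v` by a (possibly empty) walk. -/
def Reaches (u v : V) : Prop :=
  u = v ∨ ∃ W, G.IsWalk W ∧ G.src W = some u ∧ G.dst W = some v

def StronglyConnected : Prop := ∀ u v : V, G.Reaches u v

/-- In-degree of a node. -/
noncomputable def inDeg (v : V) : ℕ := Nat.card {e : E // G.head e = v}

/-- Out-degree of a node. -/
noncomputable def outDeg (v : V) : ℕ := Nat.card {e : E // G.tail e = v}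

def JoinArc (e : E) : Prop := 1 < G.inDeg (G.head e)

def SplitArc (e : E) : Prop := 1 < G.outDeg (G.tail e)

def Bivalent (v : V) : Prop := 1 < G.inDeg v ∧ 1 < G.outDeg v

def JoinFree (W : List E) : Prop := ∀ e ∈ W, ¬ G.JoinArc e

def SplitFree (W : List E) : Prop := ∀ e ∈ W, ¬ G.SplitArc e

/-- A closed walk covering every arc at least once. -/
def IsClosedArcCovering (W : List E) : Prop :=
  G.IsWalk W ∧ W ≠ [] ∧ G.src W = G.dst W ∧ ∀ e : E, e ∈ W

/-- `W'` occurs as a cyclic (wrap-around) subwalk of the closed walk `W`. -/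
def IsCyclicSubwalk (W' W : List E) : Prop :=
  ∃ i : ℕ, ∀ k : ℕ, k < W'.length → W'[k]? = W[(i + k) % W.length]?

/-- The graph consists of a single closed path through all nodes and arcs. -/
def IsClosedPathGraph : Prop :=
  ∃ C : List E, G.IsPath C ∧ C ≠ [] ∧ G.src C = G.dst C ∧ C.Nodup ∧
    (∀ e : E, e ∈ C) ∧ (∀ v : V, v ∈ G.nodes C)

/-- Compressed graph: no biunivocal nodes and no biunivocal arcs. -/
def Compressed : Prop :=
  (∀ v : V, 1 < G.inDeg v ∨ 1 < G.outDeg v) ∧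
  (∀ e : E, G.JoinArc e ∨ G.SplitArc e)

/-- `u` reaches `v` by a (possibly empty) path avoiding the arc `f`. -/
def ReachesAvoid (f : E) (u v : V) : Prop :=
  u = v ∨ ∃ P, G.IsPath P ∧ f ∉ P ∧ G.src P = some u ∧ G.dst P = some v

/-- A maximal omnitig: an omnitig extendable neither to the left nor to the right. -/
def IsMaximalOmnitig (W : List E) : Prop :=
  G.IsOmnitig W ∧ (∀ e : E, ¬ G.IsOmnitig (e :: W)) ∧ (∀ e : E, ¬ G.IsOmnitig (W ++ [e]))

/-- The reverse graph. -/
def rev : MultiDigraph V E := ⟨G.head, G.tail⟩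

/-- Nodes reachable from `v` by a join-free path. -/
def Rplus (v : V) : Set V :=
  {u | u = v ∨ ∃ W, G.IsPath W ∧ G.JoinFree W ∧ G.src W = some v ∧ G.dst W = some u}

/-- Nodes reaching `v` by a split-free path. -/
def Rminus (v : V) : Set V :=
  {u | u = v ∨ ∃ W, G.IsPath W ∧ G.SplitFree W ∧ G.src W = some u ∧ G.dst W = some v}

/-- The node set of the macronode centered at `v`. -/
def macronodeSet (v : V) : Set V := G.Rplus v ∪ G.Rminus v

/-- The graph obtained from `G` by contracting the arc `e`. -/
def contract [DecidableEq V] (e : E) : MultiDigraph V {a : E // a ≠ e} where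
  tail a := if G.tail a.1 = G.head e then G.tail e else G.tail a.1
  head a := if G.head a.1 = G.head e then G.tail e else G.head a.1

end MultiDigraph

/-!
If `[f, g]` is an omnitig then `head f = tail g =: v`, and a nonempty closed path at `v` that
neither starts with `g` nor ends with `f` would be a forbidden path for `(g, f)`. When `f` is a
join arc, strong connectivity closes some other arc `e ≠ f` entering `v` into a closed path at
`v` ending with `e`; that path must start with `g`, so `g` is determined by `f`. Dually, when `g`
is a split arc, a closed path starting with another arc leaving `v` determines `f` from `g`.
-/

namespace MultiDigraph

variable {V E : Type} (G : MultiDigraph V E)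

lemma head?_nodes (W : List E) : (G.nodes W).head? = G.src W := by
  cases W <;> rfl

lemma getLast?_nodes (W : List E) : (G.nodes W).getLast? = G.dst W := by
  cases W with
  | nil => rfl
  | cons a W => rw [nodes, dst, ← List.getLast?_map, List.map_cons, List.getLast?_cons_cons]

lemma nodes_cons {a : E} {W : List E} (h : G.src W = some (G.head a)) :
    G.nodes (a :: W) = G.tail a :: G.nodes W := by
  cases W with
  | nil => simp [src] at h
  | cons b W => simp_all [nodes, src]

lemma nodes_append_singleton {W : List E} (hW : W ≠ []) (a : E) :
    G.nodes (W ++ [a]) = G.nodes W ++ [G.head a] := by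
  cases W with
  | nil => exact absurd rfl hW
  | cons b W => simp [nodes]

lemma exists_simple_walk_of_mem_nodes {u w : V} :
    ∀ {P : List E}, G.IsWalk P → (G.nodes P).Nodup → u ∈ G.nodes P → G.dst P = some w →
      u ≠ w → ∃ Q, G.IsWalk Q ∧ (G.nodes Q).Nodup ∧ G.src Q = some u ∧ G.dst Q = some w
  | [], _, _, hu, _, _ => by simp [nodes] at hu
  | a :: P, hw, hnd, hu, hd, hne => by
    by_cases hua : u = G.tail a
    · exact ⟨a :: P, hw, hnd, by simp [src, hua], hd⟩
    cases P with
    | nil =>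
      simp only [nodes, dst, List.map_cons, List.map_nil, List.mem_cons, List.not_mem_nil,
        or_false, List.getLast?_singleton, Option.map_some, Option.some.injEq] at hu hd
      exact absurd (hd ▸ hu.resolve_left hua) hne
    | cons b P =>
      have hab : G.head a = G.tail b := (List.isChain_cons_cons.mp hw).1
      rw [G.nodes_cons (by simp [src, hab])] at hnd hu
      exact exists_simple_walk_of_mem_nodes (List.isChain_cons_cons.mp hw).2 hnd.of_cons
        ((List.mem_cons.mp hu).resolve_left hua) (by simpa [dst] using hd) hne

lemma exists_simple_walk_of_walk {u w : V} :
    ∀ {W : List E}, G.IsWalk W → G.src W = some u → G.dst W = some w → u ≠ w →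
      ∃ Q, G.IsWalk Q ∧ (G.nodes Q).Nodup ∧ G.src Q = some u ∧ G.dst Q = some w
  | [], _, hs, _, _ => by simp [src] at hs
  | a :: W, hw, hs, hd, hne => by
    have hu : G.tail a = u := by simpa [src] using hs
    by_cases haw : G.head a = w
    · exact ⟨[a], List.isChain_singleton a, by simp [nodes, hu, haw, hne], by simp [src, hu],
        by simp [dst, haw]⟩
    cases W with
    | nil => simp [dst, haw] at hd
    | cons b W =>
      have hab : G.head a = G.tail b := (List.isChain_cons_cons.mp hw).1
      obtain ⟨Q, hQw, hQnd, hQs, hQd⟩ := exists_simple_walk_of_walk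
        (List.isChain_cons_cons.mp hw).2 (by simp [src, hab]) (by simpa [dst] using hd) haw
      by_cases huQ : u ∈ G.nodes Q
      · exact G.exists_simple_walk_of_mem_nodes hQw hQnd huQ hQd hne
      cases Q with
      | nil => simp [src] at hQs
      | cons c Q =>
        have hac : G.head a = G.tail c := by simpa [src] using hQs.symm
        refine ⟨a :: c :: Q, List.isChain_cons_cons.mpr ⟨hac, hQw⟩, ?_, by simp [src, hu],
          by simpa [dst] using hQd⟩
        rw [G.nodes_cons hQs, hu]
        exact List.nodup_cons.mpr ⟨huQ, hQnd⟩

lemma exists_simple_walk (hG : G.StronglyConnected) {u w : V} (hne : u ≠ w) :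
    ∃ Q, G.IsWalk Q ∧ (G.nodes Q).Nodup ∧ G.src Q = some u ∧ G.dst Q = some w := by
  obtain heq | ⟨W, hW, hs, hd⟩ := hG u w
  · exact absurd heq hne
  · exact G.exists_simple_walk_of_walk hW hs hd hne

lemma exists_closed_isPath_getLast?_eq (hG : G.StronglyConnected) (e : E) :
    ∃ P, G.IsPath P ∧ P ≠ [] ∧ G.src P = some (G.head e) ∧ G.dst P = some (G.head e) ∧
      P.getLast? = some e := by
  by_cases hloop : G.tail e = G.head e
  · exact ⟨[e], ⟨List.isChain_singleton e, by simp [nodes], by simp [nodes]⟩, by simp,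
      by simp [src, hloop], by simp [dst], by simp⟩
  obtain ⟨Q, hQw, hQnd, hQs, hQd⟩ := G.exists_simple_walk hG (Ne.symm hloop)
  obtain ⟨c, R, rfl⟩ : ∃ c R, Q = c :: R :=
    List.exists_cons_of_ne_nil (by rintro rfl; simp [src] at hQs)
  obtain ⟨rest, hQnodes⟩ : ∃ rest, G.nodes (c :: R) = G.head e :: rest :=
    List.head?_eq_some_iff.mp ((G.head?_nodes _).trans hQs)
  have hnodes := G.nodes_append_singleton (List.cons_ne_nil c R) e
  refine ⟨c :: R ++ [e], ⟨?_, ?_, ?_⟩, by simp, hQs, by rw [dst, List.getLast?_concat]; rfl,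
    List.getLast?_concat⟩
  · refine hQw.append (List.isChain_singleton e) fun x hx y hy => ?_
    simp_all [dst]
  · rwa [hnodes, List.dropLast_concat]
  · rw [hQnodes, List.nodup_cons] at hQnd
    rw [hnodes, hQnodes, List.cons_append, List.tail_cons]
    exact hQnd.2.append (List.nodup_singleton _) (by simpa using hQnd.1)

lemma exists_closed_isPath_head?_eq (hG : G.StronglyConnected) (e : E) :
    ∃ P, G.IsPath P ∧ P ≠ [] ∧ G.src P = some (G.tail e) ∧ G.dst P = some (G.tail e) ∧
      P.head? = some e := by
  by_cases hloop : G.head e = G.tail e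
  · exact ⟨[e], ⟨List.isChain_singleton e, by simp [nodes], by simp [nodes]⟩, by simp,
      by simp [src], by simp [dst, hloop], by simp⟩
  obtain ⟨Q, hQw, hQnd, hQs, hQd⟩ := G.exists_simple_walk hG hloop
  have hnodes := G.nodes_cons hQs
  obtain ⟨c, R, rfl⟩ : ∃ c R, Q = c :: R :=
    List.exists_cons_of_ne_nil (by rintro rfl; simp [src] at hQs)
  refine ⟨e :: c :: R, ⟨?_, ?_, ?_⟩, by simp, by simp [src], by simpa [dst] using hQd, rfl⟩
  · exact List.isChain_cons_cons.mpr ⟨by simpa [src] using hQs.symm, hQw⟩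
  · have hlast : G.tail e ∉ (G.nodes (c :: R)).dropLast := by
      have := List.dropLast_append_getLast? _ ((G.getLast?_nodes _).trans hQd)
      rw [← this, List.nodup_append] at hQnd
      exact fun hm => hQnd.2.2 _ hm _ (List.mem_singleton_self _) rfl
    rw [hnodes, List.dropLast_cons_of_ne_nil (by simp [nodes])]
    exact List.nodup_cons.mpr ⟨hlast, hQnd.sublist (List.dropLast_sublist _)⟩
  · rwa [hnodes, List.tail_cons]

lemma exists_ne_head_eq [Finite E] {f : E} (hf : G.JoinArc f) :
    ∃ e, G.head e = G.head f ∧ e ≠ f := by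
  have : Nontrivial {e : E // G.head e = G.head f} := Finite.one_lt_card_iff_nontrivial.mp hf
  obtain ⟨e, he⟩ := exists_ne (⟨f, rfl⟩ : {e : E // G.head e = G.head f})
  exact ⟨e.1, e.2, fun hc => he (Subtype.ext hc)⟩

lemma exists_ne_tail_eq [Finite E] {g : E} (hg : G.SplitArc g) :
    ∃ e, G.tail e = G.tail g ∧ e ≠ g := by
  have : Nontrivial {e : E // G.tail e = G.tail g} := Finite.one_lt_card_iff_nontrivial.mp hg
  obtain ⟨e, he⟩ := exists_ne (⟨g, rfl⟩ : {e : E // G.tail e = G.tail g})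
  exact ⟨e.1, e.2, fun hc => he (Subtype.ext hc)⟩

namespace IsOmnitig

variable {G} {f g : E}

lemma head_eq_tail (h : G.IsOmnitig [f, g]) : G.head f = G.tail g :=
  (List.isChain_pair (R := fun a b => G.head a = G.tail b)).mp h.1

lemma head?_eq_or_getLast?_eq (h : G.IsOmnitig [f, g]) {P : List E} (hP : G.IsPath P)
    (hne : P ≠ []) (hs : G.src P = some (G.tail g)) (hd : G.dst P = some (G.head f)) :
    P.head? = some g ∨ P.getLast? = some f := by
  by_contra! hPg
  exact h.2 1 1 le_rfl le_rfl (by simp) ⟨P, hP, hne, hs, hd, hPg.1, hPg.2⟩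

lemma pair_right_unique [Finite E] (hG : G.StronglyConnected) (hf : G.JoinArc f) {g' : E}
    (h : G.IsOmnitig [f, g]) (h' : G.IsOmnitig [f, g']) : g = g' := by
  obtain ⟨e, he, hef⟩ := G.exists_ne_head_eq hf
  obtain ⟨P, hP, hne, hs, hd, hlast⟩ := G.exists_closed_isPath_getLast?_eq hG e
  rw [he] at hs hd
  have hlast_ne : P.getLast? ≠ some f := by simpa [hlast] using hef
  have hg := (h.head?_eq_or_getLast?_eq hP hne (h.head_eq_tail ▸ hs) hd).resolve_right hlast_ne
  have hg' := (h'.head?_eq_or_getLast?_eq hP hne (h'.head_eq_tail ▸ hs) hd).resolve_right hlast_ne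
  exact Option.some_injective _ (hg.symm.trans hg')

lemma pair_left_unique [Finite E] (hG : G.StronglyConnected) (hg : G.SplitArc g) {f' : E}
    (h : G.IsOmnitig [f, g]) (h' : G.IsOmnitig [f', g]) : f = f' := by
  obtain ⟨e, he, heg⟩ := G.exists_ne_tail_eq hg
  obtain ⟨P, hP, hne, hs, hd, hhead⟩ := G.exists_closed_isPath_head?_eq hG e
  rw [he] at hs hd
  have hhead_ne : P.head? ≠ some g := by simpa [hhead] using heg
  have hf := (h.head?_eq_or_getLast?_eq hP hne hs (h.head_eq_tail ▸ hd)).resolve_left hhead_ne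
  have hf' := (h'.head?_eq_or_getLast?_eq hP hne hs (h'.head_eq_tail ▸ hd)).resolve_left hhead_ne
  exact Option.some_injective _ (hf.symm.trans hf')

end IsOmnitig

end MultiDigraph

theorem stmt_10_general {V E : Type} [Fintype E]
    (G : MultiDigraph V E) (hG : G.StronglyConnected)
    (v : V) (f₁ g₁ : E)
    (hjf : G.JoinArc f₁) (hsg : G.SplitArc g₁)
    (h : G.IsOmnitig [f₁, g₁]) :
    (∀ g' : E, g' ≠ g₁ → G.tail g' = v → ¬ G.IsOmnitig [f₁, g']) ∧
    (∀ f' : E, f' ≠ f₁ → G.head f' = v → ¬ G.IsOmnitig [f', g₁]) :=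
  ⟨fun _ hne _ h' => hne (h.pair_right_unique hG hjf h').symm,
    fun _ hne _ h' => hne (h.pair_left_unique hG hsg h').symm⟩

/-- X-intersection Property, part ii. -/
theorem stmt_10 {V E : Type} [Fintype V] [Fintype E]
    (G : MultiDigraph V E) (hG : G.StronglyConnected)
    (v : V) (hv : G.Bivalent v) (f₁ g₁ : E)
    (hjf : G.JoinArc f₁) (hsg : G.SplitArc g₁)
    (hhf : G.head f₁ = v) (htg : G.tail g₁ = v)
    (h : G.IsOmnitig [f₁, g₁]) :
    (∀ g' : E, g' ≠ g₁ → G.tail g' = v → ¬ G.IsOmnitig [f₁, g']) ∧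
    (∀ f' : E, f' ≠ f₁ → G.head f' = v → ¬ G.IsOmnitig [f', g₁]) :=
  stmt_10_general G hG v f₁ g₁ hjf hsg h
end

section
/- No omnitig traverses a join arc twice, and no omnitig traverses a split arc twice. -/
/-!
Suppose an omnitig traverses the join arc `e` twice, and let `v` be the head of `e`. Since `v`
has a second in-arc `f ≠ e`, strong connectivity gives a cycle `P` through `v` ending with `f`;
a shortest one is a path that enters `v` only with its last arc. Let `g` be the last arc into `v`
strictly before the second occurrence of `e`. The part of the omnitig after `g` and the cycle `P`
both start at `v` and next enter `v` with their last arcs, `e` and `f`, so they must diverge at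
some node, leaving it through different arcs `a ≠ b`. The rest of `P` from `b` is then a
forbidden path from `tail a` to `head e`, against the first occurrence of `e` before `a`.

Split arcs are join arcs of the reverse graph, where the reversed omnitig satisfies the same
condition, so the second claim follows from the first.
-/

namespace List

variable {α : Type*}

theorem exists_eq_append_cons_append_cons_of_pair_sublist {a b : α} {l : List α}
    (h : [a, b] <+ l) : ∃ l₁ l₂ l₃, l = l₁ ++ a :: (l₂ ++ b :: l₃) := by
  obtain ⟨r₁, r₂, rfl, ha, hb⟩ := cons_sublist_iff.mp h
  obtain ⟨l₁, l₂, rfl⟩ := append_of_mem ha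
  obtain ⟨m, l₃, rfl⟩ := append_of_mem (singleton_sublist.mp hb)
  exact ⟨l₁, l₂ ++ m, l₃, by simp⟩

theorem exists_eq_append_cons_append_cons_of_not_pairwise {r : α → α → Prop} {l : List α}
    (h : ¬ l.Pairwise r) : ∃ l₁ a l₂ b l₃, l = l₁ ++ a :: (l₂ ++ b :: l₃) ∧ ¬ r a b := by
  rw [pairwise_iff_forall_sublist] at h
  push Not at h
  obtain ⟨a, b, hab, hr⟩ := h
  obtain ⟨l₁, l₂, l₃, rfl⟩ := exists_eq_append_cons_append_cons_of_pair_sublist hab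
  exact ⟨l₁, a, l₂, b, l₃, rfl, hr⟩

theorem exists_eq_append_cons_forall_not_of_exists {p : α → Prop} {l : List α}
    (h : ∃ a ∈ l, p a) : ∃ l₁ a l₂, l = l₁ ++ a :: l₂ ∧ p a ∧ ∀ b ∈ l₂, ¬ p b := by
  induction l with
  | nil => simp at h
  | cons a l ih =>
    by_cases hl : ∃ b ∈ l, p b
    · obtain ⟨l₁, b, l₂, rfl, hb, hl₂⟩ := ih hl
      exact ⟨a :: l₁, b, l₂, rfl, hb, hl₂⟩
    · push Not at hl
      exact ⟨[], a, l, rfl, by grind, hl⟩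

theorem exists_common_prefix_of_concat_ne {p : α → Prop} {l l' : List α} {a a' : α}
    (hl : ∀ b ∈ l, ¬ p b) (hl' : ∀ b ∈ l', ¬ p b) (ha : p a) (ha' : p a') (hne : a ≠ a') :
    ∃ c b b' t t', b ≠ b' ∧ l ++ [a] = c ++ b :: t ∧ l' ++ [a'] = c ++ b' :: t' := by
  induction l generalizing l' with
  | nil =>
    cases l' with
    | nil => exact ⟨[], a, a', [], [], hne, rfl, rfl⟩
    | cons b' l' =>
      exact ⟨[], a, b', [], l' ++ [a'], fun h => hl' b' (by simp) (h ▸ ha), rfl, rfl⟩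
  | cons b l ih =>
    cases l' with
    | nil => exact ⟨[], b, a', l ++ [a], [], fun h => hl b (by simp) (h ▸ ha'), rfl, rfl⟩
    | cons b' l' =>
      by_cases hb : b = b'
      · subst hb
        obtain ⟨c, d, d', t, t', hdd', h, h'⟩ :=
          ih (l' := l') (fun x hx => hl x (by simp [hx])) (fun x hx => hl' x (by simp [hx]))
        exact ⟨b :: c, d, d', t, t', hdd', by simp [h], by simp [h']⟩
      · exact ⟨[], b, b', l ++ [a], l' ++ [a'], hb, rfl, rfl⟩

end List

namespace MultiDigraph

variable {V E : Type} {G : MultiDigraph V E}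

theorem isWalk_iff {W : List E} : G.IsWalk W ↔ W.IsChain (fun a b => G.head a = G.tail b) :=
  Iff.rfl

theorem tail_nodes (W : List E) : (G.nodes W).tail = W.map G.head := by
  cases W <;> rfl

theorem dropLast_nodes {W : List E} (hW : G.IsWalk W) : (G.nodes W).dropLast = W.map G.tail := by
  induction W with
  | nil => rfl
  | cons a W ih =>
    cases W with
    | nil => rfl
    | cons b W =>
      obtain ⟨hab, hW⟩ := List.isChain_cons_cons.mp hW
      have hnodes : G.nodes (a :: b :: W) = G.tail a :: G.nodes (b :: W) := by simp [nodes, hab]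
      rw [hnodes, List.dropLast_cons_of_ne_nil (by simp [nodes]), ih hW]
      rfl

theorem isPath_iff {W : List E} :
    G.IsPath W ↔ G.IsWalk W ∧ (W.map G.tail).Nodup ∧ (W.map G.head).Nodup :=
  and_congr_right fun hW => by rw [dropLast_nodes hW, tail_nodes]

theorem IsPath.of_append_right {A B : List E} (h : G.IsPath (A ++ B)) : G.IsPath B := by
  rw [isPath_iff, List.map_append, List.map_append] at *
  exact ⟨h.1.right_of_append, h.2.1.of_append_right, h.2.2.of_append_right⟩

theorem IsWalk.cut_of_tail_eq {A B D : List E} {x y : E} (h : G.IsWalk (A ++ x :: (B ++ y :: D)))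
    (hxy : G.tail x = G.tail y) : G.IsWalk (A ++ y :: D) := by
  rw [isWalk_iff, List.isChain_append] at *
  refine ⟨h.1, h.2.1.suffix (by simp), ?_⟩
  simpa [← hxy] using h.2.2

theorem IsWalk.cut_of_head_eq {A B D : List E} {x y : E} (h : G.IsWalk (A ++ x :: (B ++ y :: D)))
    (hxy : G.head x = G.head y) : G.IsWalk (A ++ x :: D) := by
  rw [isWalk_iff] at *
  rw [show A ++ x :: D = (A ++ [x]) ++ D by simp, List.isChain_append]
  refine ⟨h.prefix ⟨B ++ y :: D, by simp⟩, h.suffix ⟨A ++ x :: B ++ [y], by simp⟩, ?_⟩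
  simp only [List.getLast?_concat, Option.mem_def, Option.some.injEq, forall_eq', hxy]
  exact (h.suffix ⟨A ++ x :: B, by simp⟩).rel_head?

theorem exists_shorter_closed_walk {v : V} {e : E} {L : List E} (hL : G.IsWalk L)
    (hsrc : G.src L = some v) (hdst : G.dst L = some v) (hlast : L.getLast? ≠ some e)
    (hL' : ¬ G.IsPath L) :
    ∃ L', L'.length < L.length ∧ G.IsWalk L' ∧ G.src L' = some v ∧ G.dst L' = some v ∧
      L'.getLast? ≠ some e := by
  simp only [isPath_iff, List.Nodup, List.pairwise_map, not_and_or] at hL'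
  rcases hL' with hL' | htail | hhead
  · exact absurd hL hL'
  · obtain ⟨A, x, B, y, D, rfl, hxy⟩ := List.exists_eq_append_cons_append_cons_of_not_pairwise htail
    have hcut : (A ++ y :: D).getLast? = (A ++ x :: (B ++ y :: D)).getLast? := by
      simp [List.getLast?_cons]
    refine ⟨A ++ y :: D, by simp, hL.cut_of_tail_eq (not_not.mp hxy), ?_, ?_, ?_⟩
    · cases A <;> simp_all [src]
    · rwa [dst, hcut]
    · rwa [hcut]
  · obtain ⟨A, x, B, y, D, rfl, hxy⟩ := List.exists_eq_append_cons_append_cons_of_not_pairwise hhead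
    cases D with
    | nil =>
      -- `y` is the final return to `v`, so the walk may restart at `x`, which also enters `v`
      have hyv : G.head y = v := by simpa [dst, List.getLast?_cons] using hdst
      have hx : G.IsWalk (x :: (B ++ [y])) := hL.suffix ⟨A, rfl⟩
      refine ⟨B ++ [y], by simp; omega, hx.tail, ?_, by simp [dst, hyv],
        by simpa [List.getLast?_cons] using hlast⟩
      have hxB := hx.rel_head?
      cases B <;> simp_all [src]
    | cons d D =>
      have hcut : (A ++ x :: d :: D).getLast? = (A ++ x :: (B ++ y :: d :: D)).getLast? := by
        simp [List.getLast?_cons]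
      refine ⟨A ++ x :: d :: D, by simp, hL.cut_of_head_eq (not_not.mp hxy), ?_, ?_, ?_⟩
      · cases A <;> simp_all [src]
      · rwa [dst, hcut]
      · rwa [hcut]

theorem exists_isPath_closed_of_isWalk {v : V} {e : E} {L : List E} (hL : G.IsWalk L)
    (hsrc : G.src L = some v) (hdst : G.dst L = some v) (hlast : L.getLast? ≠ some e) :
    ∃ P, G.IsPath P ∧ G.src P = some v ∧ G.dst P = some v ∧ P.getLast? ≠ some e := by
  induction hn : L.length using Nat.strong_induction_on generalizing L with
  | _ n ih =>
    by_cases hP : G.IsPath L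
    · exact ⟨L, hP, hsrc, hdst, hlast⟩
    obtain ⟨L', hlt, hL', hsrc', hdst', hlast'⟩ := exists_shorter_closed_walk hL hsrc hdst hlast hP
    exact ih _ (hn ▸ hlt) hL' hsrc' hdst' hlast' rfl

theorem JoinArc.exists_ne {e : E} (he : G.JoinArc e) : ∃ f ≠ e, G.head f = G.head e := by
  have : Finite {a // G.head a = G.head e} :=
    Nat.finite_of_card_ne_zero (by unfold JoinArc inDeg at he; omega)
  have : Nontrivial {a // G.head a = G.head e} := Finite.one_lt_card_iff_nontrivial.mp he
  obtain ⟨⟨f, hf⟩, hfe⟩ := _root_.exists_ne (⟨e, rfl⟩ : {a // G.head a = G.head e})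
  exact ⟨f, fun h => hfe (Subtype.ext h), hf⟩

theorem JoinArc.exists_isPath_closed (hG : G.StronglyConnected) {e : E} (he : G.JoinArc e) :
    ∃ P, G.IsPath P ∧ G.src P = some (G.head e) ∧ G.dst P = some (G.head e) ∧
      P.getLast? ≠ some e := by
  obtain ⟨f, hfe, hf⟩ := he.exists_ne
  suffices ∃ L, G.IsWalk L ∧ G.src L = some (G.head e) ∧ L.getLast? = some f by
    obtain ⟨L, hL, hsrc, hlast⟩ := this
    exact exists_isPath_closed_of_isWalk hL hsrc (by simp [dst, hlast, hf])
      (by simpa [hlast] using hfe)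
  rcases hG (G.head e) (G.tail f) with h | ⟨L, hL, hsrc, hdst⟩
  · exact ⟨[f], List.isChain_singleton f, by simp [src, h], rfl⟩
  · have hL0 : L ≠ [] := by rintro rfl; simp [src] at hsrc
    refine ⟨L ++ [f], hL.append (List.isChain_singleton f) ?_, ?_, by simp⟩
    · intro x hx y hy
      simp_all [dst]
    · rwa [src, List.head?_append_of_ne_nil _ hL0]

/-- The omnitig condition on pairs of positions `i - 1 < j`, stated through the decomposition
`W = A ++ e_{i-1} :: (B ++ e_j :: D)`; unlike the indexed form, it is visibly invariant under
reversing the graph and the walk. -/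
def ForbiddenFree (G : MultiDigraph V E) (W : List E) : Prop :=
  ∀ A x B y D P, W = A ++ x :: (B ++ y :: D) → ¬ G.ForbiddenPath y x P

theorem IsOmnitig.forbiddenFree {W : List E} (hW : G.IsOmnitig W) : G.ForbiddenFree W := by
  rintro A x B y D P rfl hP
  refine hW.2 (A.length + 1) (A.length + 1 + B.length) (by omega) (by omega) (by simp; omega)
    ⟨P, ?_⟩
  convert hP using 2 <;> grind

theorem forbiddenPath_of_isPath_append_cons {g a b e : E} {C T T' : List E}
    (hW : G.IsWalk (g :: (C ++ a :: T))) (hP : G.IsPath (C ++ b :: T'))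
    (hsrc : G.src (C ++ b :: T') = some (G.head g))
    (hdst : G.dst (C ++ b :: T') = some (G.head e))
    (hlast : (C ++ b :: T').getLast? ≠ some e) (hab : a ≠ b) :
    G.ForbiddenPath a e (b :: T') := by
  have hgetLast : (C ++ b :: T').getLast? = (b :: T').getLast? :=
    List.getLast?_append_of_ne_nil _ (List.cons_ne_nil _ _)
  have htail : G.tail b = G.tail a := by
    rcases C.eq_nil_or_concat with rfl | ⟨C, c, rfl⟩
    · exact (by simpa [src] using hsrc : G.tail b = G.head g).trans
        (List.isChain_cons_cons.mp hW).1
    · rw [List.concat_eq_append, List.append_assoc, List.singleton_append] at hW hP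
      exact (List.isChain_append_cons_cons.mp hP.1).2.1.symm.trans
        (List.isChain_append_cons_cons.mp hW.tail).2.1
  exact ⟨hP.of_append_right, List.cons_ne_nil _ _, by simp [src, htail],
    by rwa [dst, ← hgetLast], by simpa using hab.symm, by rwa [← hgetLast]⟩

theorem ForbiddenFree.count_le_one_of_joinArc [DecidableEq E] (hG : G.StronglyConnected)
    {W : List E} (hW : G.IsWalk W) (hF : G.ForbiddenFree W) {e : E} (he : G.JoinArc e) :
    W.count e ≤ 1 := by
  by_contra! hc
  obtain ⟨A, M, D, rfl⟩ :=
    List.exists_eq_append_cons_append_cons_of_pair_sublist (List.replicate_sublist_iff.mpr hc)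
  obtain ⟨P, hP, hPsrc, hPdst, hPlast⟩ := he.exists_isPath_closed hG
  obtain ⟨P, f, rfl⟩ := P.eq_nil_or_concat.resolve_left (by rintro rfl; simp [src] at hPsrc)
  rw [List.concat_eq_append] at *
  have hf : G.head f = G.head e := by simpa [dst] using hPdst
  have hP0 : ∀ a ∈ P, G.head a ≠ G.head e := by
    have := (isPath_iff.mp hP).2.2
    simp only [List.map_append, List.map_singleton, List.nodup_append, List.mem_singleton,
      hf] at this
    exact fun a ha => this.2.2 _ (List.mem_map_of_mem ha) _ rfl
  obtain ⟨A', g, M', hM, hg, hM'⟩ := List.exists_eq_append_cons_forall_not_of_exists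
    (p := fun a => G.head a = G.head e) (l := e :: M) ⟨e, by simp, rfl⟩
  obtain ⟨C, a, b, T, T', hab, hX, hQ⟩ :=
    List.exists_common_prefix_of_concat_ne hM' hP0 rfl hf (by simpa using hPlast : f ≠ e).symm
  have hB : e :: (A' ++ g :: C).tail = A' ++ g :: C := by
    apply List.cons_head?_tail
    have := congrArg List.head? hM
    cases A' <;> simp_all
  have hWeq : A ++ e :: (M ++ e :: D) = A ++ A' ++ g :: (C ++ a :: T) ++ D :=
    calc A ++ e :: (M ++ e :: D) = A ++ (e :: M) ++ e :: D := by simp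
      _ = A ++ A' ++ g :: (M' ++ [e]) ++ D := by rw [hM]; simp
      _ = A ++ A' ++ g :: (C ++ a :: T) ++ D := by rw [hX]
  rw [hQ] at hP hPsrc hPdst hPlast
  refine hF A e (A' ++ g :: C).tail a (T ++ D) (b :: T') ?_ <|
    forbiddenPath_of_isPath_append_cons (hW.infix ⟨A ++ A', D, hWeq.symm⟩) hP
      (hPsrc.trans (by rw [hg])) hPdst hPlast hab
  rw [hWeq, ← List.cons_append (a := e), hB]
  simp

@[simp] theorem rev_tail : G.rev.tail = G.head := rfl

@[simp] theorem rev_head : G.rev.head = G.tail := rfl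

theorem IsWalk.rev {W : List E} (hW : G.IsWalk W) : G.rev.IsWalk W.reverse :=
  List.isChain_reverse.mpr (hW.imp fun _ _ h => h.symm)

theorem IsPath.rev {W : List E} (hW : G.IsPath W) : G.rev.IsPath W.reverse := by
  rw [isPath_iff] at *
  exact ⟨hW.1.rev, by simpa using hW.2.2, by simpa using hW.2.1⟩

@[simp] theorem rev_src_reverse (W : List E) : G.rev.src W.reverse = G.dst W := by
  simp [src, dst, List.head?_reverse]

@[simp] theorem rev_dst_reverse (W : List E) : G.rev.dst W.reverse = G.src W := by
  simp [src, dst, List.getLast?_reverse]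

theorem ForbiddenPath.rev {x y : E} {P : List E} (hP : G.ForbiddenPath y x P) :
    G.rev.ForbiddenPath x y P.reverse := by
  obtain ⟨hP, hne, hsrc, hdst, hhead, hlast⟩ := hP
  exact ⟨hP.rev, by simpa using hne, by simpa using hdst, by simpa using hsrc,
    by simpa [List.head?_reverse] using hlast, by simpa [List.getLast?_reverse] using hhead⟩

theorem ForbiddenFree.rev {W : List E} (hW : G.ForbiddenFree W) :
    G.rev.ForbiddenFree W.reverse := by
  intro A x B y D P hA hP
  apply hW D.reverse y B.reverse x A.reverse P.reverse
  · simpa using congrArg List.reverse hA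
  · exact hP.rev

theorem StronglyConnected.rev (hG : G.StronglyConnected) : G.rev.StronglyConnected := by
  intro u v
  rcases hG v u with rfl | ⟨W, hW, hsrc, hdst⟩
  · exact Or.inl rfl
  · exact Or.inr ⟨W.reverse, hW.rev, by simpa using hdst, by simpa using hsrc⟩

theorem ForbiddenFree.count_le_one_of_splitArc [DecidableEq E] (hG : G.StronglyConnected)
    {W : List E} (hW : G.IsWalk W) (hF : G.ForbiddenFree W) {e : E} (he : G.SplitArc e) :
    W.count e ≤ 1 := by
  simpa using hF.rev.count_le_one_of_joinArc hG.rev hW.rev he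

end MultiDigraph

theorem stmt_11_general {V E : Type} [DecidableEq E]
    (G : MultiDigraph V E) (hG : G.StronglyConnected)
    (W : List E) (hW : G.IsOmnitig W) (e : E)
    (he : G.JoinArc e ∨ G.SplitArc e) :
    W.count e ≤ 1 := by
  rcases he with he | he
  · exact hW.forbiddenFree.count_le_one_of_joinArc hG hW.1 he
  · exact hW.forbiddenFree.count_le_one_of_splitArc hG hW.1 he

/-- No omnitig traverses a join arc or a split arc twice. -/
theorem stmt_11 {V E : Type} [Fintype V] [Fintype E] [DecidableEq E]
    (G : MultiDigraph V E) (hG : G.StronglyConnected)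
    (W : List E) (hW : G.IsOmnitig W) (e : E)
    (he : G.JoinArc e ∨ G.SplitArc e) :
    W.count e ≤ 1 :=
  stmt_11_general G hG W hW e he
end
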